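/- The function q defined by q(t) = -t for -1 < t ≤ 0, q(t) = t for 0 < t ≤ 1, q(t) = -t + 2 for 1 < t ≤ 2, and q(t) = t - 2 for 2 < t ≤ 3 satisfies, at all points of differentiability: (i) 2q'(t) + q'(t-1) + q'(t+1) = 0 for t ∈ (0,2); (ii) q'(t) + q'(t-1) = 0 for t ∈ (2,3); (iii) (q'(t)+q'(t-1))² - 2q'(t)(2q'(t)+q'(t-1)+q'(t+1)) = 0 for t ∈ (0,2); and (iv) q'(t)² - q'(t-1)² = 0 for t ∈ (2,3). -/
import Mathlib


/-- The piecewise linear function: `q(t) = -t` for `t ≤ 0`, `q(t) = t` for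
`0 < t ≤ 1`, `q(t) = -t + 2` for `1 < t ≤ 2`, `q(t) = t - 2` for `t > 2`. -/
noncomputable def qzig : ℝ → ℝ := fun t =>
  if t ≤ 0 then -t else if t ≤ 1 then t else if t ≤ 2 then -t + 2 else t - 2

lemma qzig_d1 {t : ℝ} (ht : t < 0) : deriv qzig t = -1 := by
  have h : qzig =ᶠ[nhds t] (fun s => -s) := by
    filter_upwards [Iio_mem_nhds ht] with s hs
    simp [qzig, le_of_lt (Set.mem_Iio.mp hs)]
  rw [h.deriv_eq]
  simpa using ((hasDerivAt_id t).neg).deriv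

lemma qzig_d2 {t : ℝ} (h0 : 0 < t) (h1 : t < 1) : deriv qzig t = 1 := by
  have h : qzig =ᶠ[nhds t] (fun s => s) := by
    filter_upwards [Ioo_mem_nhds h0 h1] with s hs
    simp [qzig, not_le.2 hs.1, hs.2.le]
  rw [h.deriv_eq]
  exact deriv_id t

lemma qzig_d3 {t : ℝ} (h0 : 1 < t) (h1 : t < 2) : deriv qzig t = -1 := by
  have h : qzig =ᶠ[nhds t] (fun s => -s + 2) := by
    filter_upwards [Ioo_mem_nhds h0 h1] with s hs
    simp [qzig, not_le.2 (lt_trans one_pos hs.1), not_le.2 hs.1, hs.2.le]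
  rw [h.deriv_eq]
  simpa using (((hasDerivAt_id t).neg).add_const 2).deriv

lemma qzig_d4 {t : ℝ} (h0 : 2 < t) : deriv qzig t = 1 := by
  have h : qzig =ᶠ[nhds t] (fun s => s - 2) := by
    filter_upwards [Ioi_mem_nhds h0] with s hs
    have h2 : (2:ℝ) < s := hs
    simp [qzig, not_le.2 h2, not_le.2 (lt_trans one_lt_two h2),
      not_le.2 (lt_trans two_pos h2)]
  rw [h.deriv_eq]
  simpa using ((hasDerivAt_id t).sub_const 2).deriv

/-- `qzig` satisfies, at all points of differentiability (i.e. away from the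
corner point `t = 1` on `(0,2)`): the delayed Euler–Lagrange equations and the
delayed DuBois–Reymond conditions with constants `0`. -/
theorem stmt_3 :
    (∀ t ∈ Set.Ioo (0 : ℝ) 2, t ≠ 1 →
      2 * deriv qzig t + deriv qzig (t - 1) + deriv qzig (t + 1) = 0) ∧
    (∀ t ∈ Set.Ioo (2 : ℝ) 3,
      deriv qzig t + deriv qzig (t - 1) = 0) ∧
    (∀ t ∈ Set.Ioo (0 : ℝ) 2, t ≠ 1 →
      (deriv qzig t + deriv qzig (t - 1)) ^ 2
        - 2 * deriv qzig t *
          (2 * deriv qzig t + deriv qzig (t - 1) + deriv qzig (t + 1)) = 0) ∧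
    (∀ t ∈ Set.Ioo (2 : ℝ) 3,
      (deriv qzig t) ^ 2 - (deriv qzig (t - 1)) ^ 2 = 0) := by
  have key : ∀ t ∈ Set.Ioo (0 : ℝ) 2, t ≠ 1 →
      deriv qzig t + deriv qzig (t - 1) = 0 ∧
      2 * deriv qzig t + deriv qzig (t - 1) + deriv qzig (t + 1) = 0 := by
    rintro t ⟨h0, h2⟩ hne
    rcases lt_or_gt_of_ne hne with h | h
    · rw [qzig_d2 h0 h, qzig_d1 (by linarith), qzig_d3 (by linarith) (by linarith)]
      norm_num
    · rw [qzig_d3 h h2, qzig_d2 (by linarith) (by linarith), qzig_d4 (by linarith)]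
      norm_num
  have key2 : ∀ t ∈ Set.Ioo (2 : ℝ) 3,
      deriv qzig t = 1 ∧ deriv qzig (t - 1) = -1 := by
    rintro t ⟨h0, h3⟩
    exact ⟨qzig_d4 h0, qzig_d3 (by linarith) (by linarith)⟩
  refine ⟨fun t ht hne => (key t ht hne).2,
    fun t ht => by rw [(key2 t ht).1, (key2 t ht).2]; ring,
    fun t ht hne => ?_,
    fun t ht => by rw [(key2 t ht).1, (key2 t ht).2]; ring⟩
  rw [(key t ht hne).1, (key t ht hne).2]
  ring
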